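/- For every nonzero real y, the stable self-similar Burgers profile satisfies the auxiliary estimate \(\tfrac{5}{2} + 3\,\overline{W}'(y) + \dfrac{1}{y(1+y^2)}\Big(\tfrac{3y}{2} + \overline{W}(y)\Big) \ge \dfrac{y^2}{1+y^2}\). -/

import Mathlib

/-- The stable self-similar Burgers profile. -/
noncomputable def burgersW (y : ℝ) : ℝ :=
  (-(y / 2) + Real.sqrt (1 / 27 + y ^ 2 / 4)) ^ ((1 : ℝ) / 3)
    - (y / 2 + Real.sqrt (1 / 27 + y ^ 2 / 4)) ^ ((1 : ℝ) / 3)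

/-!
Cardano's formula says that `W̄(y)` is the real root of `w ^ 3 + w + y = 0`, so `W̄` is the
inverse of the increasing polynomial `w ↦ -(w + w ^ 3)` and `W̄' = -1 / (1 + 3 W̄ ^ 2)`. Substituting
`y = -(w + w ^ 3)` with `w = W̄(y) ≠ 0` turns the estimate into the positivity of
`w ^ 2 (9 w ^ 8 + 24 w ^ 6 + 18 w ^ 4 + 24 w ^ 2 + 17)` over a positive denominator.
-/

open Filter

theorem cardano_root {p q A B : ℝ} (hAB : 3 * A * B = p) (hcube : A ^ 3 - B ^ 3 = -q) :
    (A - B) ^ 3 + p * (A - B) + q = 0 := by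
  linear_combination hcube - (A - B) * hAB

theorem Real.rpow_one_third_pow_three {x : ℝ} (hx : 0 ≤ x) : (x ^ (1 / 3 : ℝ)) ^ 3 = x := by
  simpa using Real.rpow_inv_natCast_pow hx (n := 3) three_ne_zero

theorem burgersW_cubic (y : ℝ) : burgersW y ^ 3 + burgersW y + y = 0 := by
  unfold burgersW
  set s := √(1 / 27 + y ^ 2 / 4)
  have hbound : |y / 2| < s := (Real.lt_sqrt (abs_nonneg _)).mpr (by rw [sq_abs]; linarith)
  rw [abs_lt] at hbound
  have ha : 0 < -(y / 2) + s := by linarith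
  have hb : 0 < y / 2 + s := by linarith
  have hs : s ^ 2 = 1 / 27 + y ^ 2 / 4 := Real.sq_sqrt (by positivity)
  set A := (-(y / 2) + s) ^ ((1 : ℝ) / 3)
  set B := (y / 2 + s) ^ ((1 : ℝ) / 3)
  have hA : A ^ 3 = -(y / 2) + s := Real.rpow_one_third_pow_three ha.le
  have hB : B ^ 3 = y / 2 + s := Real.rpow_one_third_pow_three hb.le
  have hAB : A * B = 1 / 3 := by
    refine (pow_left_inj₀ (by positivity) (by norm_num) three_ne_zero).mp ?_
    rw [mul_pow, hA, hB]
    linear_combination hs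
  linear_combination
    cardano_root (A := A) (B := B) (p := 1) (q := y) (by linarith) (by rw [hA, hB]; ring)

theorem continuous_burgersW : Continuous burgersW := by
  unfold burgersW
  fun_prop (disch := norm_num)

theorem hasDerivAt_neg_add_cube (w : ℝ) :
    HasDerivAt (fun w : ℝ => -(w + w ^ 3)) (-(1 + 3 * w ^ 2)) w :=
  (((hasDerivAt_id' w).add (hasDerivAt_pow 3 w)).neg).congr_deriv (by ring)

theorem hasDerivAt_burgersW (y : ℝ) :
    HasDerivAt burgersW (-(1 + 3 * burgersW y ^ 2))⁻¹ y :=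
  (hasDerivAt_neg_add_cube (burgersW y)).of_local_left_inverse continuous_burgersW.continuousAt
    (neg_ne_zero.mpr (by positivity))
    (Eventually.of_forall fun x => by linarith [burgersW_cubic x])

theorem deriv_burgersW (y : ℝ) : deriv burgersW y = -(1 + 3 * burgersW y ^ 2)⁻¹ := by
  rw [(hasDerivAt_burgersW y).deriv, inv_neg]

theorem auxiliary_estimate_of_cubic_root {w y : ℝ} (hy : y ≠ 0) (hcubic : w ^ 3 + w + y = 0) :
    y ^ 2 / (1 + y ^ 2) ≤
      5 / 2 + 3 * -(1 + 3 * w ^ 2)⁻¹ + 1 / (y * (1 + y ^ 2)) * (3 * y / 2 + w) := by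
  obtain rfl : y = -(w + w ^ 3) := by linarith
  have hw : w ≠ 0 := by rintro rfl; simp at hy
  have hdiff : 5 / 2 + 3 * -(1 + 3 * w ^ 2)⁻¹
        + 1 / (-(w + w ^ 3) * (1 + (-(w + w ^ 3)) ^ 2)) * (3 * -(w + w ^ 3) / 2 + w)
        - (-(w + w ^ 3)) ^ 2 / (1 + (-(w + w ^ 3)) ^ 2)
      = w ^ 2 * (9 * w ^ 8 + 24 * w ^ 6 + 18 * w ^ 4 + 24 * w ^ 2 + 17)
        / (2 * (1 + 3 * w ^ 2) * (1 + w ^ 2) * (1 + (w + w ^ 3) ^ 2)) := by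
    have hw3 : w + w ^ 3 ≠ 0 := by
      rw [show w + w ^ 3 = w * (1 + w ^ 2) by ring]; positivity
    field_simp
    ring
  exact sub_nonneg.mp (hdiff ▸ by positivity)

/-- Auxiliary estimate: for every nonzero real `y`,
`5/2 + 3 W̄'(y) + (1/(y(1+y²))) (3y/2 + W̄(y)) ≥ y²/(1+y²)`. -/
theorem burgersW_auxiliary_estimate (y : ℝ) (hy : y ≠ 0) :
    y ^ 2 / (1 + y ^ 2) ≤
      5 / 2 + 3 * deriv burgersW y +
        1 / (y * (1 + y ^ 2)) * (3 * y / 2 + burgersW y) := by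
  rw [deriv_burgersW]
  exact auxiliary_estimate_of_cubic_root hy (burgersW_cubic y)
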